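/- arXiv:1811.03831 — 7 statements merged into one kernel-verified Lean document; each statement's English description precedes it below -/
import Mathlib

section
/- Let 0 < γ₁ < 1 < γ₂, let σ : ℕ → ℝ be a sequence with σ(0) = σ₀ > 0, and let S ⊆ ℕ be a set of indices ('successful iterations') such that for every j ∈ ℕ: if j ∈ S then σ(j+1) ≥ γ₁ σ(j), and if j ∉ S then σ(j+1) ≥ γ₂ σ(j). Let k ∈ ℕ and suppose σ(j) ≤ σ_max for all j ≤ k+1, where σ_max > 0. Then k + 1 ≤ |S ∩ {0,…,k}| · (1 + |log γ₁| / log γ₂) + (1/log γ₂) · log(σ_max / σ₀). -/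
/-- If `0 < γ₁ < 1 < γ₂`, `σ 0 = σ₀ > 0`, `σ(j+1) ≥ γ₁ σ j` on successful iterations
`j ∈ S` and `σ(j+1) ≥ γ₂ σ j` on unsuccessful ones, and `σ j ≤ σ_max` for all `j ≤ k+1`,
then `k+1 ≤ |S ∩ {0,…,k}| (1 + |log γ₁|/log γ₂) + (1/log γ₂) log(σ_max/σ₀)`. -/
theorem stmt3 (γ₁ γ₂ : ℝ) (hγ₁0 : 0 < γ₁) (hγ₁1 : γ₁ < 1) (hγ₂ : 1 < γ₂)
    (σ : ℕ → ℝ) (σ₀ : ℝ) (hσinit : σ 0 = σ₀) (hσ₀ : 0 < σ₀)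
    (S : Set ℕ)
    (hS : ∀ j : ℕ, j ∈ S → γ₁ * σ j ≤ σ (j + 1))
    (hU : ∀ j : ℕ, j ∉ S → γ₂ * σ j ≤ σ (j + 1))
    (k : ℕ) (σmax : ℝ) (hσmax : 0 < σmax)
    (hbnd : ∀ j ≤ k + 1, σ j ≤ σmax) :
    (k + 1 : ℝ) ≤ ((S ∩ Set.Iic k).ncard : ℝ) * (1 + |Real.log γ₁| / Real.log γ₂)
      + (1 / Real.log γ₂) * Real.log (σmax / σ₀) := by
  classical
  set T : ℕ → Finset ℕ := fun n => (Finset.range n).filter (· ∈ S) with hT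
  have hTcardle : ∀ n, (T n).card ≤ n := by
    intro n
    calc (T n).card ≤ (Finset.range n).card := Finset.card_filter_le _ _
    _ = n := Finset.card_range n
  have key : ∀ n, σ₀ * γ₁ ^ (T n).card * γ₂ ^ (n - (T n).card) ≤ σ n := by
    intro n
    induction n with
    | zero => simp [hT, hσinit]
    | succ n ih =>
      have ha : (T n).card ≤ n := hTcardle n
      have hσnpos : 0 < σ n := lt_of_lt_of_le (by positivity) ih
      by_cases hn : n ∈ S
      · have hTs : T (n+1) = insert n (T n) := by
          simp [hT, Finset.range_add_one, Finset.filter_insert, hn]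
        have hnmem : n ∉ T n := by simp [hT]
        rw [hTs, Finset.card_insert_of_notMem hnmem]
        have : n + 1 - ((T n).card + 1) = n - (T n).card := by omega
        rw [this]
        calc σ₀ * γ₁ ^ ((T n).card + 1) * γ₂ ^ (n - (T n).card)
            = γ₁ * (σ₀ * γ₁ ^ (T n).card * γ₂ ^ (n - (T n).card)) := by ring
          _ ≤ γ₁ * σ n := by
              apply mul_le_mul_of_nonneg_left ih hγ₁0.le
          _ ≤ σ (n+1) := hS n hn
      · have hTs : T (n+1) = T n := by
          simp [hT, Finset.range_add_one, Finset.filter_insert, hn]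
        rw [hTs]
        have : n + 1 - (T n).card = (n - (T n).card) + 1 := by omega
        rw [this]
        calc σ₀ * γ₁ ^ (T n).card * γ₂ ^ ((n - (T n).card) + 1)
            = γ₂ * (σ₀ * γ₁ ^ (T n).card * γ₂ ^ (n - (T n).card)) := by ring
          _ ≤ γ₂ * σ n := by
              apply mul_le_mul_of_nonneg_left ih (by linarith)
          _ ≤ σ (n+1) := hU n hn
  have hset : S ∩ Set.Iic k = ↑(T (k+1)) := by
    ext x
    simp [hT, Nat.lt_succ_iff, and_comm]
  have hncard : (S ∩ Set.Iic k).ncard = (T (k+1)).card := by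
    rw [hset, Set.ncard_coe_finset]
  set m := (T (k+1)).card with hm
  have hmle : m ≤ k + 1 := hTcardle (k+1)
  have hmain : σ₀ * γ₁ ^ m * γ₂ ^ (k + 1 - m) ≤ σmax :=
    le_trans (key (k+1)) (hbnd (k+1) le_rfl)
  -- take logs
  have hL : 0 < Real.log γ₂ := Real.log_pos hγ₂
  have hlog : Real.log σ₀ + m * Real.log γ₁ + ((k+1-m : ℕ) : ℝ) * Real.log γ₂
      ≤ Real.log σmax := by
    have h1 : Real.log (σ₀ * γ₁ ^ m * γ₂ ^ (k + 1 - m)) ≤ Real.log σmax :=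
      Real.log_le_log (by positivity) hmain
    rw [Real.log_mul (by positivity) (by positivity),
        Real.log_mul (by positivity) (by positivity),
        Real.log_pow, Real.log_pow] at h1
    linarith
  have habs : |Real.log γ₁| = -Real.log γ₁ := by
    rw [abs_of_nonpos (Real.log_nonpos hγ₁0.le hγ₁1.le)]
  have hlogdiv : Real.log (σmax / σ₀) = Real.log σmax - Real.log σ₀ :=
    Real.log_div hσmax.ne' hσ₀.ne'
  have hcast : ((k+1-m : ℕ) : ℝ) = (k+1 : ℝ) - m := by
    push_cast [Nat.cast_sub hmle]
    ring
  rw [hncard, habs, hlogdiv]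
  rw [hcast] at hlog
  have h2 : ((k+1:ℝ) - m) * Real.log γ₂ ≤ (Real.log σmax - Real.log σ₀)
      + m * (-Real.log γ₁) := by linarith
  have h3 : (k+1:ℝ) - m ≤ ((Real.log σmax - Real.log σ₀) + m * (-Real.log γ₁))
      / Real.log γ₂ := (le_div_iff₀ hL).mpr h2
  have h4 : (m:ℝ) * (1 + -Real.log γ₁ / Real.log γ₂)
      + 1 / Real.log γ₂ * (Real.log σmax - Real.log σ₀)
      = m + ((Real.log σmax - Real.log σ₀) + m * (-Real.log γ₁)) / Real.log γ₂ := by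
    field_simp
    ring
  rw [h4]
  linarith
end

section
/- Let F ⊆ ℝ^n be a set, x ∈ F, δ ∈ (0,1], and ω ∈ (0,1). Let ΔT : ℝ^n → ℝ and Δ̄T : ℝ^n → ℝ be functions, and suppose there is d_k ∈ ℝ^n with ‖d_k‖ ≤ δ and x + d_k ∈ F such that Δ̄T(d_k) > 0, Δ̄T(d) ≤ Δ̄T(d_k) for all d with ‖d‖ ≤ δ and x + d ∈ F, and |Δ̄T(d) − ΔT(d)| ≤ ω · Δ̄T(d_k) for all d with ‖d‖ ≤ δ and x + d ∈ F. Define φ := max(0, sup{ ΔT(d) : ‖d‖ ≤ δ, x + d ∈ F }) and φ̄ := max(0, sup{ Δ̄T(d) : ‖d‖ ≤ δ, x + d ∈ F }). Then (1 − ω) φ̄ ≤ φ ≤ (1 + ω) φ̄. -/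
/-- If `Δ̄T` attains a positive maximum `Δ̄T(d_k)` over the feasible set
`{d : ‖d‖ ≤ δ, x + d ∈ F}` and `|Δ̄T(d) − ΔT(d)| ≤ ω Δ̄T(d_k)` on that set, then the
measures `φ := max(0, sup ΔT)` and `φ̄ := max(0, sup Δ̄T)` satisfy
`(1−ω) φ̄ ≤ φ ≤ (1+ω) φ̄`. -/
theorem stmt7 {n : ℕ} (F : Set (EuclideanSpace ℝ (Fin n)))
    (x : EuclideanSpace ℝ (Fin n)) (hx : x ∈ F)
    (δ ω : ℝ) (hδ0 : 0 < δ) (hδ1 : δ ≤ 1) (hω0 : 0 < ω) (hω1 : ω < 1)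
    (ΔT ΔTbar : EuclideanSpace ℝ (Fin n) → ℝ)
    (dk : EuclideanSpace ℝ (Fin n)) (hdknorm : ‖dk‖ ≤ δ) (hdkF : x + dk ∈ F)
    (hpos : 0 < ΔTbar dk)
    (hmax : ∀ d : EuclideanSpace ℝ (Fin n), ‖d‖ ≤ δ → x + d ∈ F → ΔTbar d ≤ ΔTbar dk)
    (hacc : ∀ d : EuclideanSpace ℝ (Fin n), ‖d‖ ≤ δ → x + d ∈ F →
      |ΔTbar d - ΔT d| ≤ ω * ΔTbar dk) :
    (1 - ω) * max 0 (sSup (ΔTbar '' {d | ‖d‖ ≤ δ ∧ x + d ∈ F}))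
        ≤ max 0 (sSup (ΔT '' {d | ‖d‖ ≤ δ ∧ x + d ∈ F})) ∧
    max 0 (sSup (ΔT '' {d | ‖d‖ ≤ δ ∧ x + d ∈ F}))
        ≤ (1 + ω) * max 0 (sSup (ΔTbar '' {d | ‖d‖ ≤ δ ∧ x + d ∈ F})) := by
  set S : Set (EuclideanSpace ℝ (Fin n)) := {d | ‖d‖ ≤ δ ∧ x + d ∈ F} with hS
  have hdkS : dk ∈ S := ⟨hdknorm, hdkF⟩
  -- sSup of ΔTbar image is ΔTbar dk
  have hbarSup : sSup (ΔTbar '' S) = ΔTbar dk := by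
    apply le_antisymm
    · refine csSup_le ⟨ΔTbar dk, ⟨dk, hdkS, rfl⟩⟩ ?_
      rintro y ⟨d, ⟨hd1, hd2⟩, rfl⟩
      exact hmax d hd1 hd2
    · refine le_csSup ⟨ΔTbar dk, ?_⟩ ⟨dk, hdkS, rfl⟩
      rintro y ⟨d, ⟨hd1, hd2⟩, rfl⟩; exact hmax d hd1 hd2
  have hmaxbar : max 0 (sSup (ΔTbar '' S)) = ΔTbar dk := by
    rw [hbarSup]; exact max_eq_right hpos.le
  -- ΔT is bounded above by (1+ω) ΔTbar dk on S
  have hub : ∀ y ∈ ΔT '' S, y ≤ (1 + ω) * ΔTbar dk := by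
    rintro y ⟨d, ⟨hd1, hd2⟩, rfl⟩
    have h1 := hacc d hd1 hd2
    have h2 := hmax d hd1 hd2
    have := abs_le.mp h1
    nlinarith [this.1, this.2]
  have hbdd : BddAbove (ΔT '' S) := ⟨(1 + ω) * ΔTbar dk, hub⟩
  have hlow : (1 - ω) * ΔTbar dk ≤ ΔT dk := by
    have := abs_le.mp (hacc dk hdknorm hdkF)
    nlinarith [this.1, this.2]
  constructor
  · rw [hmaxbar]
    calc (1 - ω) * ΔTbar dk ≤ ΔT dk := hlow
      _ ≤ sSup (ΔT '' S) := le_csSup hbdd ⟨dk, hdkS, rfl⟩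
      _ ≤ max 0 (sSup (ΔT '' S)) := le_max_right _ _
  · rw [hmaxbar]
    apply max_le
    · nlinarith
    · exact csSup_le ⟨ΔT dk, Set.mem_image_of_mem _ hdkS⟩ hub
end

section
/- Let p ≥ 1 be an integer, β ∈ (0,1], L ≥ 0, and let f ∈ C^{p,β}(ℝ^n) with constant L. Let x, s ∈ ℝ^n with s ≠ 0, let σ > 0, η₂ ∈ (0,1) with σ ≥ (L+3)/(1−η₂), let ω ≥ 0 with ω ≤ 1/σ, and let f̄_x, f̄_{xs}, Δ̄T be real numbers satisfying: Δ̄T > (σ/(p+β)!) ‖s‖^{p+β}, |f̄_x − f(x)| ≤ ω·Δ̄T, |f̄_{xs} − f(x+s)| ≤ ω·Δ̄T, and |Δ̄T − (f(x) − T_p^f(x,s))| ≤ ω·Δ̄T. Then the ratio ρ := (f̄_x − f̄_{xs})/Δ̄T satisfies |ρ − 1| ≤ 1 − η₂, and in particular ρ ≥ η₂. -/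
open scoped BigOperators

/-!
Restricting `f` to the segment `u ↦ x + u • s` reduces the Taylor estimate to one variable. There,
by induction on `p`: the derivative of the order-`p+1` Taylor remainder of `g` is the order-`p`
remainder of `g'`, so the fencing form of the mean value inequality carries the bound
`|g⁽ᵖ⁾ t - g⁽ᵖ⁾ 0| ≤ C tᵝ` over to `|g u - Tₚ g u| ≤ C u^(p+β) / (p+β)!`, each antiderivative of
`t^(k+β)` contributing the factor `k+1+β`. As `Δ̄T > σ ‖s‖^(p+β) / (p+β)!`, the remainder is at most
`(L/σ) Δ̄T`; the three inexact quantities add at most `3ω Δ̄T ≤ 3 Δ̄T / σ`, and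
`σ ≥ (L+3)/(1-η₂)` turns the total into `|ρ - 1| ≤ 1 - η₂`.
-/
/-- Generalized factorial: `(i+β)! := ∏_{ℓ=1}^i (ℓ+β)` (empty product = 1). -/
noncomputable def hfact (β : ℝ) (i : ℕ) : ℝ := ∏ ℓ ∈ Finset.Icc 1 i, ((ℓ : ℝ) + β)

/-- The `p`-th order Taylor polynomial of `f` at `x`, evaluated at `s`. -/
noncomputable def taylorP {n : ℕ} (f : EuclideanSpace ℝ (Fin n) → ℝ) (p : ℕ)
    (x s : EuclideanSpace ℝ (Fin n)) : ℝ :=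
  ∑ ℓ ∈ Finset.range (p + 1),
    (1 / (ℓ.factorial : ℝ)) * iteratedFDeriv ℝ ℓ f x (fun _ => s)

open Set

lemma hfact_succ (β : ℝ) (p : ℕ) : hfact β (p + 1) = hfact β p * (p + 1 + β) := by
  rw [hfact, hfact, Finset.prod_Icc_succ_top (Nat.le_add_left 1 p)]
  push_cast
  ring

lemma hfact_pos {β : ℝ} (hβ : 0 ≤ β) (p : ℕ) : 0 < hfact β p :=
  Finset.prod_pos fun ℓ hℓ => by
    have : 1 ≤ ℓ := (Finset.mem_Icc.mp hℓ).1
    positivity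

lemma hasDerivAt_mul_rpow_div_hfact_succ {β : ℝ} (hβ : 0 ≤ β) (p : ℕ) (C v : ℝ) :
    HasDerivAt (fun w => C * w ^ ((p : ℝ) + 1 + β) / hfact β (p + 1))
      (C * v ^ ((p : ℝ) + β) / hfact β p) v := by
  have hpow := Real.hasDerivAt_rpow_const (x := v) (p := (p : ℝ) + 1 + β)
    (Or.inr (by linarith [(p.cast_nonneg : (0 : ℝ) ≤ p)]))
  refine ((hpow.const_mul C).div_const (hfact β (p + 1))).congr_deriv ?_
  have := hfact_pos hβ p
  rw [hfact_succ, show (p : ℝ) + 1 + β - 1 = p + β by ring]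
  field_simp

lemma abs_sub_taylorWithinEval_le_of_holder {β : ℝ} (hβ : 0 ≤ β) (p : ℕ) {g : ℝ → ℝ} {C u : ℝ}
    (hg : ContDiff ℝ p g) (hu : 0 ≤ u)
    (hHol : ∀ t ∈ Icc 0 u, |iteratedDeriv p g t - iteratedDeriv p g 0| ≤ C * t ^ β) :
    |g u - taylorWithinEval g p univ 0 u| ≤ C * u ^ ((p : ℝ) + β) / hfact β p := by
  induction p generalizing g u with
  | zero => simpa [hfact] using hHol u ⟨hu, le_rfl⟩
  | succ p ih =>
    have hg' : ContDiff ℝ (p + 1 : ℕ) g := hg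
    rw [Nat.cast_succ, contDiff_succ_iff_deriv] at hg'
    obtain ⟨hgdiff, -, hdg⟩ := hg'
    have hF : ∀ v, HasDerivAt (fun w => g w - taylorWithinEval g (p + 1) univ 0 w)
        (deriv g v - taylorWithinEval (deriv g) p univ 0 v) v := fun v => by
      have := (hgdiff v).hasDerivAt.sub (hasDerivAt_taylorWithinEval_succ (x₀ := 0) (s := univ) g p)
      rwa [derivWithin_univ] at this
    have key := image_norm_le_of_norm_deriv_right_le_deriv_boundary
      (f := fun w => g w - taylorWithinEval g (p + 1) univ 0 w) (a := 0) (b := u)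
      (fun v _ => (hF v).continuousAt.continuousWithinAt) (fun v _ => (hF v).hasDerivWithinAt)
      (by simp [Real.zero_rpow (by positivity : (p : ℝ) + 1 + β ≠ 0)])
      (hasDerivAt_mul_rpow_div_hfact_succ hβ p C)
      (fun v hv => ih hdg hv.1 fun t ht => by
        simpa only [iteratedDeriv_succ'] using hHol t ⟨ht.1, ht.2.trans hv.2.le⟩) ⟨hu, le_rfl⟩
    simpa [Nat.cast_succ] using key

lemma iteratedDeriv_comp_add_smul {E F : Type*} [NormedAddCommGroup E] [NormedSpace ℝ E]
    [NormedAddCommGroup F] [NormedSpace ℝ F] {f : E → F} {p : ℕ} (hf : ContDiff ℝ p f)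
    (x s : E) {i : ℕ} (hi : i ≤ p) (t : ℝ) :
    iteratedDeriv i (fun u : ℝ => f (x + u • s)) t
      = iteratedFDeriv ℝ i f (x + t • s) (fun _ => s) := by
  have hshift : ContDiff ℝ p (fun z => f (x + z)) := hf.comp (contDiff_const.add contDiff_id)
  have hcomp : (fun u : ℝ => f (x + u • s))
      = (fun z => f (x + z)) ∘ (ContinuousLinearMap.id ℝ ℝ).smulRight s := by
    ext u; simp
  rw [iteratedDeriv_eq_iteratedFDeriv, hcomp,
    ContinuousLinearMap.iteratedFDeriv_comp_right _ hshift t (by exact_mod_cast hi),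
    ContinuousMultilinearMap.compContinuousLinearMap_apply, iteratedFDeriv_comp_add_left]
  simp

lemma abs_sub_taylorP_le_of_holder {n p : ℕ} {β L : ℝ} (hβ : 0 < β)
    {f : EuclideanSpace ℝ (Fin n) → ℝ} (hf : ContDiff ℝ p f)
    (hHol : ∀ x y : EuclideanSpace ℝ (Fin n),
      ‖iteratedFDeriv ℝ p f x - iteratedFDeriv ℝ p f y‖ ≤ L * ‖x - y‖ ^ β)
    (x s : EuclideanSpace ℝ (Fin n)) :
    |f (x + s) - taylorP f p x s| ≤ L * ‖s‖ ^ ((p : ℝ) + β) / hfact β p := by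
  set g : ℝ → ℝ := fun u => f (x + u • s)
  have hg : ContDiff ℝ p g := hf.comp (contDiff_const.add (contDiff_id.smul contDiff_const))
  have hline : ∀ {i}, i ≤ p → ∀ t, iteratedDeriv i g t
      = iteratedFDeriv ℝ i f (x + t • s) (fun _ => s) :=
    fun hi t => iteratedDeriv_comp_add_smul hf x s hi t
  have hHolg : ∀ t ∈ Icc (0 : ℝ) 1, |iteratedDeriv p g t - iteratedDeriv p g 0|
      ≤ L * ‖s‖ ^ ((p : ℝ) + β) * t ^ β := fun t ht => by
    rw [hline le_rfl, hline le_rfl, zero_smul, add_zero, ← Real.norm_eq_abs, ← sub_apply]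
    calc ‖(iteratedFDeriv ℝ p f (x + t • s) - iteratedFDeriv ℝ p f x) (fun _ => s)‖
        ≤ ‖iteratedFDeriv ℝ p f (x + t • s) - iteratedFDeriv ℝ p f x‖ * ∏ _i : Fin p, ‖s‖ :=
          ContinuousMultilinearMap.le_opNorm _ _
      _ ≤ L * ‖t • s‖ ^ β * ‖s‖ ^ p := by
          rw [Finset.prod_const, Finset.card_univ, Fintype.card_fin]
          gcongr
          simpa using hHol (x + t • s) x
      _ = L * ‖s‖ ^ ((p : ℝ) + β) * t ^ β := by
          rw [norm_smul, Real.norm_eq_abs, abs_of_nonneg ht.1,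
            Real.mul_rpow ht.1 (norm_nonneg s), add_comm (p : ℝ),
            Real.rpow_add_natCast' (norm_nonneg s) (by positivity)]
          ring
  have hTaylor : taylorWithinEval g p univ 0 1 = taylorP f p x s := by
    rw [taylor_within_apply, taylorP]
    refine Finset.sum_congr rfl fun ℓ hℓ => ?_
    rw [iteratedDerivWithin_univ, hline (Nat.lt_succ_iff.mp (Finset.mem_range.mp hℓ)),
      zero_smul, add_zero]
    simp
  have key := abs_sub_taylorWithinEval_le_of_holder hβ.le p hg zero_le_one hHolg
  simpa [g, hTaylor] using key

lemma abs_div_sub_one_le_of_approx {fx fxs T fbx fbxs Δ ω r : ℝ} (hΔ : 0 < Δ)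
    (hfx : |fbx - fx| ≤ ω * Δ) (hfxs : |fbxs - fxs| ≤ ω * Δ) (hT : |Δ - (fx - T)| ≤ ω * Δ)
    (hR : |fxs - T| ≤ r * Δ) :
    |(fbx - fbxs) / Δ - 1| ≤ 3 * ω + r := by
  have hsplit : (fbx - fbxs) / Δ - 1
      = ((fbx - fx) - (fbxs - fxs) - (Δ - (fx - T)) - (fxs - T)) / Δ := by
    field_simp
    ring
  rw [hsplit, abs_div, abs_of_pos hΔ, div_le_iff₀ hΔ]
  calc |(fbx - fx) - (fbxs - fxs) - (Δ - (fx - T)) - (fxs - T)|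
      ≤ |fbx - fx| + |fbxs - fxs| + |Δ - (fx - T)| + |fxs - T| := by
        grw [abs_sub, abs_sub, abs_sub]
    _ ≤ (3 * ω + r) * Δ := by linarith

theorem stmt9_general {n : ℕ} (p : ℕ) (β L : ℝ)
    (hβ0 : 0 < β) (hL : 0 ≤ L)
    (f : EuclideanSpace ℝ (Fin n) → ℝ) (hf : ContDiff ℝ p f)
    (hHol : ∀ x y : EuclideanSpace ℝ (Fin n),
      ‖iteratedFDeriv ℝ p f x - iteratedFDeriv ℝ p f y‖ ≤ L * ‖x - y‖ ^ β)
    (x s : EuclideanSpace ℝ (Fin n))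
    (σ η₂ : ℝ) (hη1 : η₂ < 1)
    (hσbig : (L + 3) / (1 - η₂) ≤ σ)
    (ω : ℝ) (hω : ω ≤ 1 / σ)
    (fbx fbxs ΔTbar : ℝ)
    (hΔ : σ / hfact β p * ‖s‖ ^ ((p : ℝ) + β) < ΔTbar)
    (hfx : |fbx - f x| ≤ ω * ΔTbar)
    (hfxs : |fbxs - f (x + s)| ≤ ω * ΔTbar)
    (hT : |ΔTbar - (f x - taylorP f p x s)| ≤ ω * ΔTbar) :
    |(fbx - fbxs) / ΔTbar - 1| ≤ 1 - η₂ ∧ η₂ ≤ (fbx - fbxs) / ΔTbar := by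
  have hη : 0 < 1 - η₂ := sub_pos.mpr hη1
  have hσ : 0 < σ := (div_pos (by linarith) hη).trans_le hσbig
  have hΔpos : 0 < ΔTbar := by
    have := hfact_pos hβ0.le p
    exact lt_of_le_of_lt (by positivity) hΔ
  have hR : |f (x + s) - taylorP f p x s| ≤ L / σ * ΔTbar := calc
    _ ≤ L * ‖s‖ ^ ((p : ℝ) + β) / hfact β p := abs_sub_taylorP_le_of_holder hβ0 hf hHol x s
    _ = L / σ * (σ / hfact β p * ‖s‖ ^ ((p : ℝ) + β)) := by field_simp
    _ ≤ L / σ * ΔTbar := by gcongr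
  have hconst : 3 * ω + L / σ ≤ 1 - η₂ := by
    rw [div_le_iff₀ hη] at hσbig
    calc 3 * ω + L / σ ≤ 3 * (1 / σ) + L / σ := by gcongr
      _ = (L + 3) / σ := by ring
      _ ≤ 1 - η₂ := by rw [div_le_iff₀ hσ]; linarith
  have hρ := (abs_div_sub_one_le_of_approx hΔpos hfx hfxs hT hR).trans hconst
  exact ⟨hρ, by linarith [(abs_le.mp hρ).1]⟩

/-- If `f ∈ C^{p,β}` with constant `L`, `σ ≥ (L+3)/(1−η₂)`, `ω ≤ 1/σ`, the inexact
increment satisfies `Δ̄T > (σ/(p+β)!)‖s‖^{p+β}`, and the inexact values `f̄_x, f̄_{xs}` and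
`Δ̄T` are accurate within `ω Δ̄T`, then `ρ := (f̄_x − f̄_{xs})/Δ̄T` satisfies
`|ρ − 1| ≤ 1 − η₂`, hence `ρ ≥ η₂`. -/
theorem stmt9 {n : ℕ} (p : ℕ) (hp : 1 ≤ p) (β L : ℝ)
    (hβ0 : 0 < β) (hβ1 : β ≤ 1) (hL : 0 ≤ L)
    (f : EuclideanSpace ℝ (Fin n) → ℝ) (hf : ContDiff ℝ p f)
    (hHol : ∀ x y : EuclideanSpace ℝ (Fin n),
      ‖iteratedFDeriv ℝ p f x - iteratedFDeriv ℝ p f y‖ ≤ L * ‖x - y‖ ^ β)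
    (x s : EuclideanSpace ℝ (Fin n)) (hs : s ≠ 0)
    (σ η₂ : ℝ) (hσ : 0 < σ) (hη0 : 0 < η₂) (hη1 : η₂ < 1)
    (hσbig : (L + 3) / (1 - η₂) ≤ σ)
    (ω : ℝ) (hω0 : 0 ≤ ω) (hω : ω ≤ 1 / σ)
    (fbx fbxs ΔTbar : ℝ)
    (hΔ : σ / hfact β p * ‖s‖ ^ ((p : ℝ) + β) < ΔTbar)
    (hfx : |fbx - f x| ≤ ω * ΔTbar)
    (hfxs : |fbxs - f (x + s)| ≤ ω * ΔTbar)
    (hT : |ΔTbar - (f x - taylorP f p x s)| ≤ ω * ΔTbar) :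
    |(fbx - fbxs) / ΔTbar - 1| ≤ 1 - η₂ ∧ η₂ ≤ (fbx - fbxs) / ΔTbar :=
  stmt9_general p β L hβ0 hL f hf hHol x s σ η₂ hη1 hσbig ω hω fbx fbxs ΔTbar hΔ hfx hfxs hT
end

section
/- Let p ≥ 1 be an integer, β ∈ (0,1], and let α ∈ (0,1), η₁ ∈ (0,1], σ_min > 0, σ ≥ σ_min, ω ≥ 0 with ω ≤ α η₁ / 2. Let s ∈ ℝ^n and let fx, fxs, f̄_x, f̄_{xs}, Δ̄T be real numbers satisfying Δ̄T > (σ/(p+β)!) ‖s‖^{p+β}, |f̄_x − fx| ≤ ω·Δ̄T, |f̄_{xs} − fxs| ≤ ω·Δ̄T, and (f̄_x − f̄_{xs})/Δ̄T ≥ η₁. Then fx − fxs ≥ (η₁ (1−α) σ_min /(p+β)!) ‖s‖^{p+β}. -/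
open scoped BigOperators

/-- If `Δ̄T > (σ/(p+β)!)‖s‖^{p+β}` with `σ ≥ σ_min`, the inexact values `f̄_x, f̄_{xs}`
approximate the exact values `fx, fxs` within `ω Δ̄T` with `ω ≤ α η₁ / 2`, and the
inexact ratio satisfies `(f̄_x − f̄_{xs})/Δ̄T ≥ η₁`, then
`fx − fxs ≥ (η₁ (1−α) σ_min/(p+β)!) ‖s‖^{p+β}`. -/
theorem stmt11 {n : ℕ} (p : ℕ) (hp : 1 ≤ p) (β : ℝ) (hβ0 : 0 < β) (hβ1 : β ≤ 1)
    (α η₁ σmin σ ω : ℝ)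
    (hα0 : 0 < α) (hα1 : α < 1) (hη0 : 0 < η₁) (hη1 : η₁ ≤ 1)
    (hσmin : 0 < σmin) (hσ : σmin ≤ σ)
    (hω0 : 0 ≤ ω) (hω : ω ≤ α * η₁ / 2)
    (s : EuclideanSpace ℝ (Fin n)) (fx fxs fbx fbxs ΔTbar : ℝ)
    (hΔ : σ / hfact β p * ‖s‖ ^ ((p : ℝ) + β) < ΔTbar)
    (hfx : |fbx - fx| ≤ ω * ΔTbar)
    (hfxs : |fbxs - fxs| ≤ ω * ΔTbar)
    (hρ : η₁ ≤ (fbx - fbxs) / ΔTbar) :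
    η₁ * (1 - α) * σmin / hfact β p * ‖s‖ ^ ((p : ℝ) + β) ≤ fx - fxs := by

  have hfpos : 0 < hfact β p := by
    apply Finset.prod_pos
    intro ℓ _
    positivity
  have hns : (0:ℝ) ≤ ‖s‖ ^ ((p : ℝ) + β) := by positivity
  have hσ0 : 0 < σ := lt_of_lt_of_le hσmin hσ
  have hΔ0 : 0 < ΔTbar := lt_of_le_of_lt (by positivity) hΔ
  have hρ' : η₁ * ΔTbar ≤ fbx - fbxs := by
    rw [le_div_iff₀ hΔ0] at hρ; linarith
  have h1 := abs_le.mp hfx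
  have h2 := abs_le.mp hfxs
  have hkey : η₁ * (1 - α) * ΔTbar ≤ fx - fxs := by nlinarith
  have hmono : σmin / hfact β p * ‖s‖ ^ ((p : ℝ) + β) ≤ σ / hfact β p * ‖s‖ ^ ((p : ℝ) + β) := by
    apply mul_le_mul_of_nonneg_right _ hns
    exact div_le_div_of_nonneg_right hσ hfpos.le
  have hη1α : 0 ≤ η₁ * (1 - α) := by nlinarith
  calc η₁ * (1 - α) * σmin / hfact β p * ‖s‖ ^ ((p : ℝ) + β)
      = η₁ * (1 - α) * (σmin / hfact β p * ‖s‖ ^ ((p : ℝ) + β)) := by ring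
    _ ≤ η₁ * (1 - α) * ΔTbar := by
        apply mul_le_mul_of_nonneg_left _ hη1α
        exact le_of_lt (lt_of_le_of_lt hmono hΔ)
    _ ≤ fx - fxs := hkey
end

section
/- Let g ∈ ℝ^n, let H : ℝ^n → ℝ^n be a linear map, and let δ > 0. Then inf{ ⟨g, d⟩ + (1/2) ⟨H d, d⟩ : d ∈ ℝ^n, ‖d‖ ≤ δ } = 0 if and only if g = 0 and ⟨H d, d⟩ ≥ 0 for every d ∈ ℝ^n. -/
/-!
Along a line `t ↦ t • d` the objective is the scalar quadratic `t ⟪g, d⟫ + t² ⟪H d, d⟫ / 2`,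
which is nonnegative for small `|t|` exactly when its linear coefficient vanishes and its
quadratic one is nonnegative. Since the objective vanishes at `d = 0` and is bounded below on
the compact ball, its infimum there is `0` exactly when it is nonnegative on the ball.
-/

open scoped RealInnerProductSpace

theorem csInf_eq_iff_mem_lowerBounds {α : Type*} [ConditionallyCompleteLattice α] {S : Set α}
    {a : α} (ha : a ∈ S) (hS : BddBelow S) : sInf S = a ↔ a ∈ lowerBounds S :=
  ⟨fun h _ hx => h ▸ csInf_le hS hx, fun h => IsLeast.csInf_eq ⟨ha, h⟩⟩

-- `0` is a local minimum of the quadratic, so its derivative `a` there vanishes.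
theorem eq_zero_and_nonneg_of_forall_abs_le {a b ε : ℝ} (hε : 0 < ε)
    (h : ∀ t : ℝ, |t| ≤ ε → 0 ≤ a * t + b * t ^ 2) : a = 0 ∧ 0 ≤ b := by
  have hmin : IsLocalMin (fun t : ℝ => a * t + b * t ^ 2) 0 := by
    filter_upwards [Metric.closedBall_mem_nhds (0 : ℝ) hε] with t ht
    simpa using h t (by simpa using ht)
  have hderiv : HasDerivAt (fun t : ℝ => a * t + b * t ^ 2) a 0 := by
    simpa using ((hasDerivAt_id' (0 : ℝ)).const_mul a).fun_add
      ((hasDerivAt_pow 2 (0 : ℝ)).const_mul b)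
  obtain rfl := hmin.hasDerivAt_eq_zero hderiv
  have hε2 : 0 < ε ^ 2 := by positivity
  exact ⟨rfl, nonneg_of_mul_nonneg_left (by simpa using h ε (abs_of_pos hε).le) hε2⟩

theorem forall_norm_le_inner_add_half_inner_nonneg_iff {E : Type*} [NormedAddCommGroup E]
    [InnerProductSpace ℝ E] (g : E) (H : E →ₗ[ℝ] E) {δ : ℝ} (hδ : 0 < δ) :
    (∀ d : E, ‖d‖ ≤ δ → 0 ≤ ⟪g, d⟫ + 1 / 2 * ⟪H d, d⟫) ↔ g = 0 ∧ ∀ d : E, 0 ≤ ⟪H d, d⟫ := by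
  constructor
  · intro h
    have key (d : E) : ⟪g, d⟫ = 0 ∧ 0 ≤ 1 / 2 * ⟪H d, d⟫ := by
      refine eq_zero_and_nonneg_of_forall_abs_le (ε := δ / (‖d‖ + 1)) (by positivity)
        fun t ht => ?_
      have hnorm : ‖t • d‖ ≤ δ := by
        rw [norm_smul, Real.norm_eq_abs]
        rw [le_div_iff₀ (by positivity)] at ht
        nlinarith [abs_nonneg t, norm_nonneg d]
      have := h _ hnorm
      simp only [map_smul, real_inner_smul_left, real_inner_smul_right] at this
      linear_combination this
    exact ⟨inner_self_eq_zero.mp (key g).1, fun d => by linarith [(key d).2]⟩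
  · rintro ⟨rfl, hH⟩ d -
    simpa using hH d

/-- For `g ∈ ℝ^n`, a linear map `H : ℝ^n → ℝ^n` and `δ > 0`,
`inf{ ⟨g,d⟩ + ½⟨Hd,d⟩ : ‖d‖ ≤ δ } = 0` iff `g = 0` and `⟨Hd,d⟩ ≥ 0` for all `d`. -/
theorem stmt14 {n : ℕ} (g : EuclideanSpace ℝ (Fin n))
    (H : EuclideanSpace ℝ (Fin n) →ₗ[ℝ] EuclideanSpace ℝ (Fin n))
    (δ : ℝ) (hδ : 0 < δ) :
    sInf ((fun d : EuclideanSpace ℝ (Fin n) => ⟪g, d⟫ + (1 / 2) * ⟪H d, d⟫) ''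
        {d | ‖d‖ ≤ δ}) = 0 ↔
      (g = 0 ∧ ∀ d : EuclideanSpace ℝ (Fin n), 0 ≤ ⟪H d, d⟫) := by
  have hcont : Continuous fun d : EuclideanSpace ℝ (Fin n) => ⟪g, d⟫ + (1 / 2) * ⟪H d, d⟫ := by
    have hH := H.continuous_of_finiteDimensional
    fun_prop
  have hball : {d : EuclideanSpace ℝ (Fin n) | ‖d‖ ≤ δ} = Metric.closedBall 0 δ := by
    ext; simp
  have hbdd := ((isCompact_closedBall (0 : EuclideanSpace ℝ (Fin n)) δ).image hcont).bddBelow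
  rw [← hball] at hbdd
  rw [csInf_eq_iff_mem_lowerBounds ?_ hbdd, mem_lowerBounds, Set.forall_mem_image,
    ← forall_norm_le_inner_add_half_inner_nonneg_iff g H hδ]
  · rfl
  · exact ⟨0, by simpa using hδ.le, by simp⟩
end

section
/- Define T : ℝ → ℝ by T(s) = s² − 2s³ and m : ℝ → ℝ by m(s) = T(s) + s⁴ = s²(1−s)². Then (i) m(s) ≥ 0 = m(0) for every s ∈ ℝ, so 0 is a global minimizer of m; and (ii) inf{ T(d) : d ∈ ℝ, |d| ≤ 1 } = −1, so that T(0) − inf{ T(d) : |d| ≤ 1 } = 1. -/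
/-- For `T(s) = s² − 2s³` and `m(s) = T(s) + s⁴ = s²(1−s)²`: (i) `m(s) ≥ 0 = m(0)` for
all `s`, so `0` is a global minimizer of `m`; (ii) `inf{ T(d) : |d| ≤ 1 } = −1`, hence
`T(0) − inf{ T(d) : |d| ≤ 1 } = 1`. -/
theorem stmt16 :
    (∀ s : ℝ, (s ^ 2 - 2 * s ^ 3) + s ^ 4 = s ^ 2 * (1 - s) ^ 2) ∧
    (∀ s : ℝ, ((0:ℝ) ^ 2 - 2 * 0 ^ 3) + 0 ^ 4 ≤ (s ^ 2 - 2 * s ^ 3) + s ^ 4) ∧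
    ((0:ℝ) ^ 2 - 2 * 0 ^ 3) + 0 ^ 4 = 0 ∧
    sInf ((fun d : ℝ => d ^ 2 - 2 * d ^ 3) '' {d : ℝ | |d| ≤ 1}) = -1 ∧
    ((0:ℝ) ^ 2 - 2 * 0 ^ 3) -
      sInf ((fun d : ℝ => d ^ 2 - 2 * d ^ 3) '' {d : ℝ | |d| ≤ 1}) = 1 := by
  have hinf : sInf ((fun d : ℝ => d ^ 2 - 2 * d ^ 3) '' {d : ℝ | |d| ≤ 1}) = -1 := by
    have h : IsLeast ((fun d : ℝ => d ^ 2 - 2 * d ^ 3) '' {d : ℝ | |d| ≤ 1}) (-1) := by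
      refine ⟨⟨1, by simp, by norm_num⟩, ?_⟩
      rintro y ⟨d, hd, rfl⟩
      simp only [Set.mem_setOf_eq] at hd
      have h1 : d ≤ 1 := (abs_le.mp hd).2
      show -1 ≤ d ^ 2 - 2 * d ^ 3
      nlinarith [sq_nonneg d, sq_nonneg (2*d+1), mul_nonneg (sub_nonneg.mpr h1) (by nlinarith [sq_nonneg (2*d+1)] : (0:ℝ) ≤ 2*d^2+d+1)]
    exact h.csInf_eq
  refine ⟨fun s => by ring, fun s => by nlinarith [sq_nonneg (s*(1-s))], by norm_num,
    hinf, by rw [hinf]; norm_num⟩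
end

section
/- Let N ≥ 1 and n ≥ 1 be integers, let a_1,…,a_N ∈ ℝ^n with ‖a_i‖ ≤ κ for all i, where κ > 0, and set ā := (1/N) Σ_{i=1}^N a_i. Let ε > 0, t ∈ (0,1), and let M be a positive integer with M ≥ (4κ/ε)(2κ/ε + 1/3) · log((n+1)/t). Let Z_1,…,Z_M be independent random variables on a probability space, each uniformly distributed on {1,…,N}. Then Pr[ ‖ (1/M) Σ_{u=1}^M a_{Z_u} − ā ‖ ≥ ε ] ≤ t; equivalently, with probability at least 1 − t the subsampled average approximates ā within ε in Euclidean norm. -/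
/-!
The deviation `‖M⁻¹ ∑ a (Z u) - ā‖` is a function of the `M` independent indices that moves by at
most `2κ/M` when a single index changes, so McDiarmid's inequality (obtained by applying Hoeffding's
lemma one coordinate at a time) bounds the probability that it exceeds its mean by `s` by
`exp (-M s² / (2κ²))`. Its mean is at most `κ / √M`, because the centred summands are orthogonal in
`L²`: `𝔼 ‖∑ (a (Z u) - ā)‖² = M 𝔼 ‖a Z - ā‖² ≤ M κ²`. The sample-size condition makes
`κ / √M ≤ ε / 2`, and with `s = ε / 2` the tail is `exp (-M ε² / (8κ²)) ≤ t / (n + 1)`.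
Independence and uniformity turn every probability into a proportion of `Fin M → Fin N`, so the
whole argument runs with averages `𝔼 z` over that finite set.
-/

open MeasureTheory ProbabilityTheory Finset Real
open scoped BigOperators ENNReal

section Uniform
variable {α : Type*} [Fintype α]

lemma integral_uniformOn_univ [MeasurableSpace α] [MeasurableSingletonClass α] (f : α → ℝ) :
    ∫ x, f x ∂(uniformOn (Set.univ : Set α)) = 𝔼 x, f x := by
  rw [integral_fintype Integrable.of_finite, Fintype.expect_eq_sum_div_card, Finset.sum_div]
  refine Finset.sum_congr rfl fun x _ => ?_
  simp [Measure.real, uniformOn_univ, div_eq_inv_mul]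

/-- Hoeffding's lemma for the uniform distribution on a finite type. -/
lemma expect_exp_mul_le_of_expect_eq_zero [Nonempty α] {V : α → ℝ} {c : ℝ} (hV : 𝔼 i, V i = 0)
    (hosc : ∀ i j, V i - V j ≤ c) (r : ℝ) :
    𝔼 i, exp (r * V i) ≤ exp (r ^ 2 * c ^ 2 / 8) := by
  let _ : MeasurableSpace α := ⊤
  obtain ⟨i₀, hi₀⟩ := Finite.exists_min V
  have hrange : ∀ᵐ i ∂(uniformOn (Set.univ : Set α)), V i ∈ Set.Icc (V i₀) (V i₀ + c) :=
    ae_of_all _ fun i => ⟨hi₀ i, by linarith [hosc i i₀]⟩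
  have hmean : ∫ i, V i ∂(uniformOn (Set.univ : Set α)) = 0 := by
    rw [integral_uniformOn_univ, hV]
  have := (hasSubgaussianMGF_of_mem_Icc_of_integral_eq_zero
    (Measurable.of_discrete (f := V)).aemeasurable hrange hmean).mgf_le r
  rw [mgf, integral_uniformOn_univ] at this
  convert this using 2
  simp only [add_sub_cancel_left, NNReal.coe_pow, NNReal.coe_div, coe_nnnorm, Real.norm_eq_abs,
    NNReal.coe_ofNat, div_pow, sq_abs]
  ring

lemma expect_fin_succ_pi {M : Type*} [AddCommMonoid M] [Module ℚ≥0 M] {m : ℕ}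
    (f : (Fin (m + 1) → α) → M) : 𝔼 z, f z = 𝔼 i, 𝔼 y, f (Fin.cons i y) := by
  rw [← Finset.expect_product', Finset.univ_product_univ]
  exact Fintype.expect_equiv (Fin.consEquiv fun _ => α).symm _ _ fun z => by simp

end Uniform

def HasBoundedDifferences {ι α : Type*} (f : (ι → α) → ℝ) (c : ℝ) : Prop :=
  ∀ k (z z' : ι → α), (∀ j, j ≠ k → z j = z' j) → f z - f z' ≤ c

namespace HasBoundedDifferences
variable {α : Type*} {m : ℕ} {f : (Fin (m + 1) → α) → ℝ} {c : ℝ}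

lemma cons_sub_cons_le (hf : HasBoundedDifferences f c) (i j : α) (y : Fin m → α) :
    f (Fin.cons i y) - f (Fin.cons j y) ≤ c :=
  hf 0 _ _ fun k hk => by
    obtain ⟨l, rfl⟩ := Fin.exists_succ_eq.2 hk
    simp

lemma expect_cons [Fintype α] [Nonempty α] (hf : HasBoundedDifferences f c) :
    HasBoundedDifferences (fun y : Fin m → α => 𝔼 i, f (Fin.cons i y)) c := by
  intro k y y' hyy'
  rw [← Finset.expect_sub_distrib]
  refine Finset.expect_le univ_nonempty fun i _ => hf k.succ _ _ fun j hj => ?_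
  cases j using Fin.cases with
  | zero => rfl
  | succ l => simpa using hyy' l (fun h => hj (h ▸ rfl))

end HasBoundedDifferences

section McDiarmid
variable {α : Type*} [Fintype α] [Nonempty α] {c : ℝ}

lemma expect_exp_mul_sub_expect_le (r : ℝ) :
    ∀ {m : ℕ} {f : (Fin m → α) → ℝ}, HasBoundedDifferences f c →
      𝔼 z, exp (r * (f z - 𝔼 w, f w)) ≤ exp (m * (r ^ 2 * c ^ 2 / 8))
  | 0, f, _ => by simp
  | m + 1, f, hf => by
    set g : (Fin m → α) → ℝ := fun y => 𝔼 i, f (Fin.cons i y)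
    have hfg : 𝔼 w, f w = 𝔼 y, g y := by rw [expect_fin_succ_pi, Finset.expect_comm]
    have hstep : ∀ y, 𝔼 i, exp (r * (f (Fin.cons i y) - g y)) ≤ exp (r ^ 2 * c ^ 2 / 8) :=
      fun y => expect_exp_mul_le_of_expect_eq_zero
        (by rw [Finset.expect_sub_distrib, Fintype.expect_const, sub_self])
        (fun i j => by simpa using hf.cons_sub_cons_le i j y) r
    calc 𝔼 z, exp (r * (f z - 𝔼 w, f w))
        = 𝔼 y, (𝔼 i, exp (r * (f (Fin.cons i y) - g y))) * exp (r * (g y - 𝔼 w, g w)) := by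
          rw [expect_fin_succ_pi, Finset.expect_comm, hfg]
          refine Finset.expect_congr rfl fun y _ => ?_
          rw [Finset.expect_mul]
          refine Finset.expect_congr rfl fun i _ => ?_
          rw [← exp_add]; ring_nf
      _ ≤ 𝔼 y, exp (r ^ 2 * c ^ 2 / 8) * exp (r * (g y - 𝔼 w, g w)) :=
          Finset.expect_le_expect fun y _ =>
            mul_le_mul_of_nonneg_right (hstep y) (exp_nonneg _)
      _ ≤ exp (r ^ 2 * c ^ 2 / 8) * exp (m * (r ^ 2 * c ^ 2 / 8)) := by
          rw [← Finset.mul_expect]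
          exact mul_le_mul_of_nonneg_left (expect_exp_mul_sub_expect_le r hf.expect_cons)
            (exp_nonneg _)
      _ = exp ((m + 1 : ℕ) * (r ^ 2 * c ^ 2 / 8)) := by
          rw [← exp_add]; push_cast; ring_nf

lemma HasBoundedDifferences.card_upper_tail_le {m : ℕ} (hm : 0 < m) {f : (Fin m → α) → ℝ}
    (hf : HasBoundedDifferences f c) (hc : 0 < c) {s : ℝ} (hs : 0 ≤ s) :
    (#{z | 𝔼 w, f w + s ≤ f z} : ℝ) ≤ Fintype.card α ^ m * exp (-2 * s ^ 2 / (m * c ^ 2)) := by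
  -- the Chernoff parameter minimising `m r² c² / 8 - r s`
  set r := 4 * s / (m * c ^ 2)
  have hr : 0 ≤ r := by positivity
  have hmarkov : (#{z | 𝔼 w, f w + s ≤ f z} : ℝ) * exp (r * s)
      ≤ ∑ z, exp (r * (f z - 𝔼 w, f w)) := by
    rw [← nsmul_eq_mul]
    refine (card_nsmul_le_sum _ _ _ fun z hz => ?_).trans
      (sum_le_sum_of_subset_of_nonneg (subset_univ _) fun z _ _ => exp_nonneg _)
    have := (mem_filter.1 hz).2
    gcongr
    linarith
  have hmgf : ∑ z, exp (r * (f z - 𝔼 w, f w))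
      ≤ Fintype.card α ^ m * exp (m * (r ^ 2 * c ^ 2 / 8)) := by
    rw [← Fintype.card_mul_expect, Fintype.card_fun, Fintype.card_fin, Nat.cast_pow]
    exact mul_le_mul_of_nonneg_left (expect_exp_mul_sub_expect_le r hf) (by positivity)
  have hexp : m * (r ^ 2 * c ^ 2 / 8) - r * s = -2 * s ^ 2 / (m * c ^ 2) := by
    simp only [r]
    field_simp
    ring
  calc (#{z | 𝔼 w, f w + s ≤ f z} : ℝ)
      = #{z | 𝔼 w, f w + s ≤ f z} * exp (r * s) * exp (-(r * s)) := by
        rw [mul_assoc, ← exp_add, add_neg_cancel, exp_zero, mul_one]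
    _ ≤ Fintype.card α ^ m * exp (m * (r ^ 2 * c ^ 2 / 8)) * exp (-(r * s)) := by
        gcongr ?_ * _
        exact hmarkov.trans hmgf
    _ = Fintype.card α ^ m * exp (-2 * s ^ 2 / (m * c ^ 2)) := by
        rw [mul_assoc, ← exp_add, ← sub_eq_add_neg, hexp]

end McDiarmid

section Subsampling
variable {α E : Type*} [NormedAddCommGroup E] [InnerProductSpace ℝ E]
open RealInnerProductSpace

lemma expect_norm_sum_comp_sq [Fintype α] [Nonempty α] {b : α → E} (hb : ∑ i, b i = 0) :
    ∀ m : ℕ, 𝔼 z : Fin m → α, ‖∑ u, b (z u)‖ ^ 2 = m * 𝔼 i, ‖b i‖ ^ 2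
  | 0 => by simp
  | m + 1 => by
    have hcross : ∀ v : E, 𝔼 i, ⟪b i, v⟫ = 0 := fun v => by
      rw [Fintype.expect_eq_sum_div_card, ← sum_inner, hb, inner_zero_left, zero_div]
    calc 𝔼 z : Fin (m + 1) → α, ‖∑ u, b (z u)‖ ^ 2
        = 𝔼 i, 𝔼 y : Fin m → α, (‖b i‖ ^ 2 + 2 * ⟪b i, ∑ u, b (y u)⟫ + ‖∑ u, b (y u)‖ ^ 2) := by
          rw [expect_fin_succ_pi]
          simp only [Fin.sum_univ_succ, Fin.cons_zero, Fin.cons_succ, norm_add_sq_real]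
      _ = (m + 1 : ℕ) * 𝔼 i, ‖b i‖ ^ 2 := by
          simp only [expect_add_distrib, ← mul_expect]
          rw [Finset.expect_comm univ univ fun i (y : Fin m → α) => ⟪b i, ∑ u, b (y u)⟫]
          simp only [hcross, expect_const_zero, mul_zero, add_zero, Fintype.expect_const,
            expect_norm_sum_comp_sq hb m]
          push_cast
          ring

lemma expect_norm_sub_average_sq [Fintype α] [Nonempty α] (a : α → E) :
    𝔼 i, ‖a i - (Fintype.card α : ℝ)⁻¹ • ∑ j, a j‖ ^ 2
      = 𝔼 i, ‖a i‖ ^ 2 - ‖(Fintype.card α : ℝ)⁻¹ • ∑ j, a j‖ ^ 2 := by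
  set ā := (Fintype.card α : ℝ)⁻¹ • ∑ j, a j
  have hinner : 𝔼 i, ⟪a i, ā⟫ = ‖ā‖ ^ 2 := by
    rw [Fintype.expect_eq_sum_div_card, ← sum_inner, div_eq_inv_mul, ← real_inner_smul_left,
      real_inner_self_eq_norm_sq]
  simp only [norm_sub_sq_real, expect_add_distrib, expect_sub_distrib, ← mul_expect, hinner,
    Fintype.expect_const]
  ring

variable {a : α → E} {κ : ℝ}

lemma hasBoundedDifferences_norm_average_sub (ha : ∀ i, ‖a i‖ ≤ κ) (m : ℕ) (v : E) :
    HasBoundedDifferences (fun z : Fin m → α => ‖(m : ℝ)⁻¹ • ∑ u, a (z u) - v‖) (2 * κ / m) := by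
  intro k z z' hzz'
  have hdiff : ∑ u, a (z u) - ∑ u, a (z' u) = a (z k) - a (z' k) := by
    rw [← sum_sub_distrib, sum_eq_single k (fun u _ hu => by rw [hzz' u hu, sub_self])
      (fun h => absurd (mem_univ k) h)]
  calc ‖(m : ℝ)⁻¹ • ∑ u, a (z u) - v‖ - ‖(m : ℝ)⁻¹ • ∑ u, a (z' u) - v‖
      ≤ ‖(m : ℝ)⁻¹ • ∑ u, a (z u) - v - ((m : ℝ)⁻¹ • ∑ u, a (z' u) - v)‖ := norm_sub_norm_le _ _
    _ = (m : ℝ)⁻¹ * ‖a (z k) - a (z' k)‖ := by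
        rw [sub_sub_sub_cancel_right, ← smul_sub, hdiff, norm_smul, norm_inv, RCLike.norm_natCast]
    _ ≤ (m : ℝ)⁻¹ * (κ + κ) := by
        gcongr
        exact (norm_sub_le _ _).trans (add_le_add (ha _) (ha _))
    _ = 2 * κ / m := by ring

lemma sq_expect_norm_average_sub_le [Fintype α] [Nonempty α] (ha : ∀ i, ‖a i‖ ≤ κ) {m : ℕ}
    (hm : 0 < m) :
    (𝔼 z : Fin m → α, ‖(m : ℝ)⁻¹ • ∑ u, a (z u) - (Fintype.card α : ℝ)⁻¹ • ∑ i, a i‖) ^ 2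
      ≤ κ ^ 2 / m := by
  set ā := (Fintype.card α : ℝ)⁻¹ • ∑ i, a i
  have hmR : (0 : ℝ) < m := Nat.cast_pos.2 hm
  have hb : ∑ i, (a i - ā) = 0 := by
    rw [sum_sub_distrib, sum_const, card_univ, ← Nat.cast_smul_eq_nsmul ℝ, smul_smul,
      mul_inv_cancel₀ (Nat.cast_ne_zero.2 Fintype.card_ne_zero), one_smul, sub_self]
  have hcenter : ∀ z : Fin m → α,
      ‖(m : ℝ)⁻¹ • ∑ u, a (z u) - ā‖ ^ 2 = (m : ℝ)⁻¹ ^ 2 * ‖∑ u, (a (z u) - ā)‖ ^ 2 := by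
    intro z
    have hsmul : (m : ℝ)⁻¹ • ∑ u, a (z u) - ā = (m : ℝ)⁻¹ • ∑ u, (a (z u) - ā) := by
      rw [sum_sub_distrib, sum_const, card_univ, Fintype.card_fin, ← Nat.cast_smul_eq_nsmul ℝ,
        smul_sub, smul_smul, inv_mul_cancel₀ hmR.ne', one_smul]
    rw [hsmul, norm_smul, mul_pow, norm_inv, RCLike.norm_natCast]
  have hvar : 𝔼 i, ‖a i - ā‖ ^ 2 ≤ κ ^ 2 :=
    calc 𝔼 i, ‖a i - ā‖ ^ 2 ≤ 𝔼 i, ‖a i‖ ^ 2 := by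
          rw [expect_norm_sub_average_sq]; linarith [sq_nonneg ‖ā‖]
      _ ≤ κ ^ 2 := expect_le univ_nonempty fun i _ => by gcongr; exact ha i
  calc (𝔼 z : Fin m → α, ‖(m : ℝ)⁻¹ • ∑ u, a (z u) - ā‖) ^ 2
      ≤ 𝔼 z : Fin m → α, ‖(m : ℝ)⁻¹ • ∑ u, a (z u) - ā‖ ^ 2 := by
        simpa using expect_mul_sq_le_sq_mul_sq univ
          (fun z : Fin m → α => ‖(m : ℝ)⁻¹ • ∑ u, a (z u) - ā‖) fun _ => 1
    _ = (m : ℝ)⁻¹ ^ 2 * (m * 𝔼 i, ‖a i - ā‖ ^ 2) := by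
        simp only [hcenter, ← mul_expect, expect_norm_sum_comp_sq hb]
    _ ≤ (m : ℝ)⁻¹ ^ 2 * (m * κ ^ 2) := by gcongr
    _ = κ ^ 2 / m := by field_simp

lemma card_subsample_deviation_le [Fintype α] [Nonempty α] (ha : ∀ i, ‖a i‖ ≤ κ) (hκ : 0 < κ)
    {ε : ℝ} (hε : 0 < ε) {m : ℕ} (hm : 0 < m) (hmε : 4 * κ ^ 2 ≤ m * ε ^ 2) :
    (#{z : Fin m → α | ε ≤ ‖(m : ℝ)⁻¹ • ∑ u, a (z u) - (Fintype.card α : ℝ)⁻¹ • ∑ i, a i‖} : ℝ)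
      ≤ Fintype.card α ^ m * exp (-(m * ε ^ 2 / (8 * κ ^ 2))) := by
  set F := fun z : Fin m → α => ‖(m : ℝ)⁻¹ • ∑ u, a (z u) - (Fintype.card α : ℝ)⁻¹ • ∑ i, a i‖
  have hmR : (0 : ℝ) < m := Nat.cast_pos.2 hm
  have hmean : 𝔼 z, F z ≤ ε / 2 := by
    refine le_of_pow_le_pow_left₀ two_ne_zero (by positivity)
      ((sq_expect_norm_average_sub_le ha hm).trans ?_)
    rw [div_le_iff₀ hmR]
    linarith
  calc (#{z | ε ≤ F z} : ℝ) ≤ #{z | 𝔼 w, F w + ε / 2 ≤ F z} := by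
        gcongr
        linarith
    _ ≤ Fintype.card α ^ m * exp (-2 * (ε / 2) ^ 2 / (m * (2 * κ / m) ^ 2)) :=
        (hasBoundedDifferences_norm_average_sub ha m _).card_upper_tail_le hm (by positivity)
          (by positivity)
    _ = Fintype.card α ^ m * exp (-(m * ε ^ 2 / (8 * κ ^ 2))) := by
        congr 2
        field_simp
        ring

end Subsampling

lemma measureReal_comp_mem_finset {Ω ι α : Type*} [MeasurableSpace Ω] {μ : Measure Ω}
    [IsProbabilityMeasure μ] [Fintype ι] [Fintype α] [Nonempty α] [MeasurableSpace α]
    [MeasurableSingletonClass α] {Z : ι → Ω → α} (hmeas : ∀ u, Measurable (Z u))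
    (hindep : iIndepFun Z μ) (hunif : ∀ u, μ.map (Z u) = (PMF.uniformOfFintype α).toMeasure)
    (s : Finset (ι → α)) :
    μ.real {ω | (fun u => Z u ω) ∈ s} = #s / Fintype.card α ^ Fintype.card ι := by
  have hjoint := (iIndepFun_iff_map_fun_eq_pi_map fun u => (hmeas u).aemeasurable).1 hindep
  have hjm : Measurable fun ω u => Z u ω := measurable_pi_lambda _ hmeas
  calc μ.real {ω | (fun u => Z u ω) ∈ s}
      = (μ.map (fun ω u => Z u ω)).real s := (map_measureReal_apply hjm s.measurableSet).symm
    _ = ∑ z ∈ s, (Measure.pi (fun u => μ.map (Z u))).real {z} := by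
        rw [hjoint, sum_measureReal_singleton]
    _ = #s / Fintype.card α ^ Fintype.card ι := by
        simp [hunif, Measure.real, PMF.toMeasure_apply_singleton _ _ (measurableSet_singleton _),
          div_eq_mul_inv]

theorem stmt17_general (N n : ℕ) (hN : 1 ≤ N) (hn : 1 ≤ n)
    (a : Fin N → EuclideanSpace ℝ (Fin n)) (κ : ℝ) (hκ : 0 < κ)
    (ha : ∀ i : Fin N, ‖a i‖ ≤ κ)
    (ε t : ℝ) (hε : 0 < ε) (ht0 : 0 < t) (ht1 : t < 1)
    (M : ℕ)
    (hMsize : 4 * κ / ε * (2 * κ / ε + 1 / 3) * Real.log ((n + 1) / t) ≤ (M : ℝ))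
    (Ω : Type*) [MeasurableSpace Ω] (μ : Measure Ω) [IsProbabilityMeasure μ]
    (Z : Fin M → Ω → Fin N) (hmeas : ∀ u, Measurable (Z u))
    (hindep : iIndepFun Z μ)
    (hunif : ∀ u, Measure.map (Z u) μ =
      (@PMF.uniformOfFintype (Fin N) _ ⟨⟨0, hN⟩⟩).toMeasure) :
    μ {ω | ε ≤ ‖(M : ℝ)⁻¹ • ∑ u : Fin M, a (Z u ω)
        - (N : ℝ)⁻¹ • ∑ i : Fin N, a i‖} ≤ ENNReal.ofReal t := by
  have : Nonempty (Fin N) := ⟨⟨0, hN⟩⟩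
  set L := Real.log ((n + 1) / t)
  have hL : 1 / 2 ≤ L := by
    have hn' : (1 : ℝ) ≤ n := Nat.one_le_cast.2 hn
    have : Real.log 2 ≤ L := log_le_log two_pos (by rw [le_div_iff₀ ht0]; nlinarith)
    linarith [log_two_gt_d9]
  have hML : 8 * κ ^ 2 * L ≤ M * ε ^ 2 := by
    have : 4 * κ / ε * (2 * κ / ε + 1 / 3) * L = (8 * κ ^ 2 * L + 4 / 3 * κ * ε * L) / ε ^ 2 := by
      field_simp; ring
    rw [this, div_le_iff₀ (by positivity)] at hMsize
    nlinarith [mul_pos (mul_pos hκ hε) (lt_of_lt_of_le one_half_pos hL)]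
  have hMpos : 0 < M := by
    have : (0 : ℝ) < M * ε ^ 2 := by nlinarith
    exact Nat.cast_pos.1 (pos_of_mul_pos_left this (sq_nonneg ε))
  have hcount := card_subsample_deviation_le ha hκ hε hMpos (by nlinarith)
  have hexp : exp (-(M * ε ^ 2 / (8 * κ ^ 2))) ≤ t :=
    calc exp (-(M * ε ^ 2 / (8 * κ ^ 2))) ≤ exp (-L) := by
          gcongr
          rw [le_div_iff₀ (by positivity)]
          linarith
      _ = t / (n + 1) := by rw [exp_neg, exp_log (by positivity), inv_div]
      _ ≤ t := div_le_self ht0.le (le_add_of_nonneg_left n.cast_nonneg)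
  rw [ENNReal.le_ofReal_iff_toReal_le (measure_ne_top _ _) ht0.le]
  have hprob := measureReal_comp_mem_finset hmeas hindep hunif
    {z | ε ≤ ‖(M : ℝ)⁻¹ • ∑ u, a (z u) - (Fintype.card (Fin N) : ℝ)⁻¹ • ∑ i, a i‖}
  simp only [Fintype.card_fin, mem_filter, mem_univ, true_and] at hprob hcount
  rw [← measureReal_def, hprob, div_le_iff₀ (by positivity)]
  nlinarith [pow_pos (Nat.cast_pos.2 hN : (0 : ℝ) < N) M]

/-- Vector subsampling (Bernstein) bound: if `‖a_i‖ ≤ κ` in Euclidean norm,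
`ā = (1/N)Σ a_i`, and `M ≥ (4κ/ε)(2κ/ε + 1/3) log((n+1)/t)`, then for i.i.d. indices
`Z₁,…,Z_M` uniform on `{1,…,N}`, the subsampled average deviates from `ā` by at least
`ε` (in Euclidean norm) with probability at most `t`. -/
theorem stmt17 (N n : ℕ) (hN : 1 ≤ N) (hn : 1 ≤ n)
    (a : Fin N → EuclideanSpace ℝ (Fin n)) (κ : ℝ) (hκ : 0 < κ)
    (ha : ∀ i : Fin N, ‖a i‖ ≤ κ)
    (ε t : ℝ) (hε : 0 < ε) (ht0 : 0 < t) (ht1 : t < 1)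
    (M : ℕ) (hM : 1 ≤ M)
    (hMsize : 4 * κ / ε * (2 * κ / ε + 1 / 3) * Real.log ((n + 1) / t) ≤ (M : ℝ))
    (Ω : Type*) [MeasurableSpace Ω] (μ : Measure Ω) [IsProbabilityMeasure μ]
    (Z : Fin M → Ω → Fin N) (hmeas : ∀ u, Measurable (Z u))
    (hindep : iIndepFun Z μ)
    (hunif : ∀ u, Measure.map (Z u) μ =
      (@PMF.uniformOfFintype (Fin N) _ ⟨⟨0, hN⟩⟩).toMeasure) :
    μ {ω | ε ≤ ‖(M : ℝ)⁻¹ • ∑ u : Fin M, a (Z u ω)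
        - (N : ℝ)⁻¹ • ∑ i : Fin N, a i‖} ≤ ENNReal.ofReal t :=
  stmt17_general N n hN hn a κ hκ ha ε t hε ht0 ht1 M hMsize Ω μ Z hmeas hindep hunif
end
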